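/- arXiv:1902.09309 — 3 statements merged into one kernel-verified Lean document; each statement's English description precedes it below -/
import Mathlib

section
/- For all integers n ≥ 1 and m with 1 ≤ m ≤ n, the cycle Stirling numbers satisfy [n, m] = (-1)^(n-m) · Σ_{h=0}^{n-m} C(h+m-1, m-1) · [n, h+m] · (-n)^h, where the equality holds in the integers. -/
/-- Unsigned Stirling numbers of the first kind (cycle Stirling numbers). -/
def stirling1 : ℕ → ℕ → ℕ
  | 0, 0 => 1
  | 0, _ + 1 => 0
  | _ + 1, 0 => 0
  | n + 1, k + 1 => n * stirling1 n (k + 1) + stirling1 n k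

open Polynomial Finset

lemma stirling1_zero_right {n : ℕ} (hn : 1 ≤ n) : stirling1 n 0 = 0 := by
  cases n with
  | zero => omega
  | succ n => rfl

lemma stirling1_eq_zero {n k : ℕ} (h : n < k) : stirling1 n k = 0 := by
  induction n generalizing k with
  | zero => cases k with
    | zero => omega
    | succ k => rfl
  | succ n ih =>
    cases k with
    | zero => omega
    | succ k => show n * stirling1 n (k+1) + stirling1 n k = 0
                rw [ih (by omega), ih (by omega)]; ring

noncomputable def Gpoly (n : ℕ) : Polynomial ℤ := ∏ j ∈ Finset.Ico 1 n, (X + C (j : ℤ))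

noncomputable def Hpoly (n : ℕ) : Polynomial ℤ := ∏ j ∈ Finset.Ico 1 n, (X - C (j : ℤ))

lemma coeff_Gpoly {n : ℕ} (hn : 1 ≤ n) (k : ℕ) :
    (Gpoly n).coeff k = stirling1 n (k + 1) := by
  induction n generalizing k with
  | zero => omega
  | succ n ih =>
    rcases Nat.lt_or_ge n 1 with h1 | h1
    · interval_cases n
      show (1 : Polynomial ℤ).coeff k = _
      cases k with
      | zero => simp [coeff_one]; rfl
      | succ k =>
        rw [coeff_one]
        simp [stirling1_eq_zero (show (1:ℕ) < k + 1 + 1 by omega)]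
    · have hsplit : Gpoly (n + 1) = Gpoly n * (X + C (n : ℤ)) := by
        rw [Gpoly, Gpoly, Finset.prod_Ico_succ_top (by omega)]
      have hrec : ∀ j, stirling1 (n + 1) (j + 1) = n * stirling1 n (j + 1) + stirling1 n j := by
        intro j; rfl
      rw [hsplit, mul_add, coeff_add, coeff_mul_C, mul_comm (Gpoly n) X]
      cases k with
      | zero =>
        rw [coeff_X_mul_zero, ih h1 0, hrec 0, stirling1_zero_right h1]
        push_cast; ring
      | succ k =>
        rw [coeff_X_mul, ih h1 k, ih h1 (k + 1), hrec (k + 1)]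
        push_cast; ring

lemma coeff_Hpoly {n : ℕ} (hn : 1 ≤ n) (k : ℕ) :
    (Hpoly n).coeff k = (-1) ^ (n + k + 1) * stirling1 n (k + 1) := by
  induction n generalizing k with
  | zero => omega
  | succ n ih =>
    rcases Nat.lt_or_ge n 1 with h1 | h1
    · interval_cases n
      show (1 : Polynomial ℤ).coeff k = _
      cases k with
      | zero => simp [coeff_one]; rfl
      | succ k =>
        rw [coeff_one]
        simp [stirling1_eq_zero (show (1:ℕ) < k + 1 + 1 by omega)]
    · have hsplit : Hpoly (n + 1) = Hpoly n * (X - C (n : ℤ)) := by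
        rw [Hpoly, Hpoly, Finset.prod_Ico_succ_top (by omega)]
      have hrec : ∀ j, stirling1 (n + 1) (j + 1) = n * stirling1 n (j + 1) + stirling1 n j := by
        intro j; rfl
      rw [hsplit, mul_sub, coeff_sub, coeff_mul_C, mul_comm (Hpoly n) X]
      cases k with
      | zero =>
        rw [coeff_X_mul_zero, ih h1 0, hrec 0, stirling1_zero_right h1,
          show n + 1 + 0 + 1 = (n + 0 + 1) + 1 from by omega, pow_succ]
        push_cast; ring
      | succ k =>
        rw [coeff_X_mul, ih h1 k, ih h1 (k + 1), hrec (k + 1),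
          show n + (k + 1) + 1 = (n + k + 1) + 1 from by omega,
          show n + 1 + (k + 1) + 1 = (n + k + 1) + 2 from by omega,
          pow_succ, pow_succ, pow_succ]
        push_cast; ring

lemma taylor_Gpoly (n : ℕ) : taylor (-(n : ℤ)) (Gpoly n) = Hpoly n := by
  rw [taylor_apply, Gpoly, Polynomial.prod_comp, Hpoly]
  have h : ∀ j ∈ Finset.Ico 1 n, (X + C ((j : ℕ) : ℤ)).comp (X + C (-(n : ℤ)))
      = X - C (((n - j : ℕ) : ℤ)) := by
    intro j hj
    rw [Finset.mem_Ico] at hj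
    rw [add_comp, X_comp, C_comp, Nat.cast_sub (le_of_lt hj.2), map_neg, C_sub]
    ring
  rw [Finset.prod_congr rfl h]
  apply Finset.prod_nbij' (fun j => n - j) (fun j => n - j)
  · intro a ha; rw [Finset.mem_Ico] at *; omega
  · intro a ha; rw [Finset.mem_Ico] at *; omega
  · intro a ha; rw [Finset.mem_Ico] at ha; omega
  · intro a ha; rw [Finset.mem_Ico] at ha; omega
  · intro a ha; rfl

lemma natDegree_Gpoly_le (n : ℕ) : (Gpoly n).natDegree ≤ n - 1 := by
  refine le_trans (Polynomial.natDegree_prod_le (Finset.Ico 1 n) fun j => X + C ((j : ℕ) : ℤ)) ?_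
  have h : ∀ j ∈ Finset.Ico 1 n, (X + C ((j : ℕ) : ℤ)).natDegree ≤ 1 :=
    fun j _ => le_of_eq (natDegree_X_add_C _)
  refine le_trans (Finset.sum_le_sum h) ?_
  simp [Nat.card_Ico]

theorem stirling1_identity_recst3 (n m : ℕ) (hm : 1 ≤ m) (hmn : m ≤ n) :
    (stirling1 n m : ℤ) =
      (-1) ^ (n - m) * ∑ h ∈ Finset.range (n - m + 1),
        ((h + m - 1).choose (m - 1) : ℤ) * stirling1 n (h + m) * (-(n : ℤ)) ^ h := by
  obtain ⟨k, rfl⟩ : ∃ k, m = k + 1 := ⟨m - 1, by omega⟩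
  have hn : 1 ≤ n := le_trans hm hmn
  have hdeg : (hasseDeriv k (Gpoly n)).natDegree < n - (k + 1) + 1 := by
    have := natDegree_hasseDeriv_le (Gpoly n) k
    have := natDegree_Gpoly_le n
    omega
  have heval : eval (-(n : ℤ)) (hasseDeriv k (Gpoly n))
      = ∑ h ∈ Finset.range (n - (k + 1) + 1),
        ((h + (k + 1) - 1).choose (k + 1 - 1) : ℤ) * stirling1 n (h + (k + 1))
          * (-(n : ℤ)) ^ h := by
    rw [eval_eq_sum_range' hdeg]
    refine Finset.sum_congr rfl (fun h _ => ?_)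
    rw [hasseDeriv_coeff, coeff_Gpoly hn,
      show h + (k + 1) - 1 = h + k from rfl, show k + 1 - 1 = k from rfl,
      show h + k + 1 = h + (k + 1) from rfl]
  have hcoeff : eval (-(n : ℤ)) (hasseDeriv k (Gpoly n))
      = (-1) ^ (n + k + 1) * stirling1 n (k + 1) := by
    rw [← taylor_coeff, taylor_Gpoly, coeff_Hpoly hn]
  rw [← heval, hcoeff, ← mul_assoc, ← pow_add]
  have h2 : n - (k + 1) + (n + k + 1) = 2 * n := by omega
  rw [h2, pow_mul]
  norm_num
end

section
/- Let p be an odd prime and i ≥ 1 an integer. Then Σ_{j=0}^{p-2i} B_j · C(j+2i-1, j) · G_{p-1}^(j+2i-1) · p^j = 0, where the equality holds in the rational numbers (the sum is finite since G_{p-1}^(m) = 0 for m > p-1). -/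
/-- `G_n^(k)`: the `k`-th elementary symmetric function of `1, 1/2, ..., 1/n`. -/
def genG (n k : ℕ) : ℚ :=
  ∑ s ∈ Finset.powersetCard k (Finset.range n), ∏ i ∈ s, (1 : ℚ) / (i + 1)

/-!
With `F = ∏_{i=1}^{p-1} (1 + X/i) = ∑_k G_{p-1}^(k) X^k` and the operator
`T = pD/(e^{pD} - 1) = ∑_j B_j p^j D^j / j!`, the sum is the coefficient of `X^(2i-1)` in `T F`,
so it suffices that `T F` is even. Two identities hold for every polynomial `P`:
`(T P)(x + p) = (T P)(x) + p P'(x)`, which on monomials is `B_k(1 + y) = B_k(y) + k y^(k-1)`;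
and `T (P(c - x)) = (T P + p P')(c - x)`, since reflection flips only the odd Bernoulli number
`B_1`.
As `p` is odd, `F(-p - x) = F(x)`, and combining the two identities gives `(T F)(-x) = (T F)(x)`.
-/

section

open Finset
open Polynomial hiding bernoulli

noncomputable def bernoulliOperator (h : ℚ) (P : ℚ[X]) : ℚ[X] :=
  ∑ j ∈ range (P.natDegree + 1), C (bernoulli j * h ^ j / j.factorial) * derivative^[j] P

theorem bernoulliOperator_eq_sum_range (h : ℚ) {P : ℚ[X]} {N : ℕ} (hN : P.natDegree < N) :
    bernoulliOperator h P =
      ∑ j ∈ range N, C (bernoulli j * h ^ j / j.factorial) * derivative^[j] P :=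
  sum_subset (range_subset_range.2 hN) fun j _ hj => by
    rw [iterate_derivative_eq_zero (by simpa using hj), mul_zero]

theorem coeff_bernoulliOperator {h : ℚ} {P : ℚ[X]} {m N : ℕ} (hN : P.natDegree ≤ m + N) :
    (bernoulliOperator h P).coeff m =
      ∑ j ∈ range (N + 1), bernoulli j * (m + j).choose j * P.coeff (m + j) * h ^ j := by
  rw [bernoulliOperator_eq_sum_range h (N := m + N + 1) (by omega), finsetSum_coeff]
  symm
  refine (sum_subset (range_subset_range.2 (Nat.le_add_left _ m)) fun j _ hj => ?_).trans ?_
  · rw [mem_range, not_lt] at hj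
    rw [coeff_eq_zero_of_natDegree_lt (by omega)]
    simp
  · refine sum_congr rfl fun j _ => ?_
    rw [coeff_C_mul, coeff_iterate_derivative, nsmul_eq_mul,
      Nat.descFactorial_eq_factorial_mul_choose]
    push_cast
    field_simp

theorem bernoulliOperator_add (h : ℚ) (P Q : ℚ[X]) :
    bernoulliOperator h (P + Q) = bernoulliOperator h P + bernoulliOperator h Q := by
  have hlt {R : ℚ[X]} (hR : R.natDegree ≤ max P.natDegree Q.natDegree) :
      R.natDegree < max P.natDegree Q.natDegree + 1 := Nat.lt_succ_of_le hR
  rw [bernoulliOperator_eq_sum_range h (hlt (natDegree_add_le P Q)),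
    bernoulliOperator_eq_sum_range h (hlt (le_max_left _ _)),
    bernoulliOperator_eq_sum_range h (hlt (le_max_right _ _)), ← sum_add_distrib]
  simp only [iterate_map_add, mul_add]

theorem bernoulliOperator_C_mul (h a : ℚ) (P : ℚ[X]) :
    bernoulliOperator h (C a * P) = C a * bernoulliOperator h P := by
  rw [bernoulliOperator_eq_sum_range h (Nat.lt_succ_of_le (natDegree_C_mul_le a P)),
    bernoulliOperator, mul_sum]
  refine sum_congr rfl fun j _ => ?_
  rw [iterate_derivative_C_mul]
  ring

theorem bernoulliOperator_zero_left (P : ℚ[X]) : bernoulliOperator 0 P = P := by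
  rw [bernoulliOperator, sum_range_succ']
  simp

theorem bernoulliOperator_X_pow {h : ℚ} (hh : h ≠ 0) (k : ℕ) :
    bernoulliOperator h (X ^ k) = C (h ^ k) * (Polynomial.bernoulli k).comp (C h⁻¹ * X) := by
  ext m
  rw [coeff_bernoulliOperator (N := k) (by simp), coeff_C_mul, comp_C_mul_X_coeff,
    coeff_bernoulli]
  simp only [coeff_X_pow]
  split_ifs with hm
  · rw [sum_eq_single (k - m) (fun j _ hj => by rw [if_neg (by omega)]; simp)
      (fun hj => absurd (mem_range.2 (by omega)) hj), if_pos (by omega), Nat.add_sub_cancel' hm,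
      Nat.choose_symm hm, pow_sub₀ h hh hm]
    ring
  · rw [sum_eq_zero fun j _ => by rw [if_neg (by omega)]; simp]
    ring

theorem bernoulliOperator_X_pow_comp_X_add_C {h : ℚ} (hh : h ≠ 0) (k : ℕ) :
    (bernoulliOperator h (X ^ k)).comp (X + C h) =
      bernoulliOperator h (X ^ k) + C h * derivative (X ^ k) := by
  have hshift : (C h⁻¹ * X).comp (X + C h) = (1 + X).comp (C h⁻¹ * X) := by
    simp only [mul_comp, C_comp, X_comp, add_comp, one_comp, mul_add, ← C_mul,
      inv_mul_cancel₀ hh, C_1]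
    ring
  have hpow :
      C (h ^ k) * (k • X ^ (k - 1) : ℚ[X]).comp (C h⁻¹ * X) = C h * derivative (X ^ k) := by
    rcases k with _ | k
    · simp
    · have hC : C (h ^ (k + 1)) * C (h⁻¹ ^ k) = C h := by
        rw [← C_mul, pow_succ, inv_pow, mul_right_comm, mul_inv_cancel₀ (pow_ne_zero k hh),
          one_mul]
      simp only [nsmul_eq_mul, mul_comp, natCast_comp, X_pow_comp, mul_pow, ← C_pow,
        derivative_X_pow, Nat.add_sub_cancel, C_eq_natCast]
      linear_combination (((k + 1 : ℕ) : ℚ[X]) * X ^ k) * hC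
  rw [bernoulliOperator_X_pow hh, mul_comp, C_comp, comp_assoc, hshift, ← comp_assoc,
    bernoulli_comp_one_add_X, add_comp, mul_add, hpow]

theorem bernoulliOperator_comp_X_add_C (h : ℚ) (P : ℚ[X]) :
    (bernoulliOperator h P).comp (X + C h) = bernoulliOperator h P + C h * derivative P := by
  rcases eq_or_ne h 0 with rfl | hh
  · simp [bernoulliOperator_zero_left]
  induction P using Polynomial.induction_on' with
  | add P Q hP hQ =>
    rw [bernoulliOperator_add, add_comp, hP, hQ, derivative_add]
    ring
  | monomial k a =>
    rw [← C_mul_X_pow_eq_monomial, bernoulliOperator_C_mul, mul_comp, C_comp,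
      bernoulliOperator_X_pow_comp_X_add_C hh, derivative_C_mul]
    ring

theorem iterate_derivative_comp_C_sub_X {R : Type*} [CommRing R] (c : R) (P : R[X]) (k : ℕ) :
    derivative^[k] (P.comp (C c - X)) = (-1) ^ k * (derivative^[k] P).comp (C c - X) := by
  induction k generalizing P with
  | zero => simp
  | succ k ih => simp [ih (derivative P), derivative_comp, pow_succ]

theorem bernoulliOperator_comp_C_sub_X (h c : ℚ) (P : ℚ[X]) :
    bernoulliOperator h (P.comp (C c - X)) =
      (bernoulliOperator h P + C h * derivative P).comp (C c - X) := by
  have hdeg : (P.comp (C c - X)).natDegree < P.natDegree + 2 := by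
    have hcomp := natDegree_comp_le (p := P) (q := C c - X)
    have hlin : (C c - X).natDegree ≤ 1 := by compute_degree!
    nlinarith
  rw [bernoulliOperator_eq_sum_range h hdeg,
    bernoulliOperator_eq_sum_range h (N := P.natDegree + 2) (by omega)]
  simp only [add_comp, Polynomial.sum_comp, mul_comp, C_comp, iterate_derivative_comp_C_sub_X]
  rw [← sub_eq_iff_eq_add', ← sum_sub_distrib, sum_eq_single 1]
  · have hB : (2 : ℚ[X]) * C (bernoulli 1) = -1 := by
      rw [_root_.bernoulli_one, ← C_ofNat, ← C_mul]
      norm_num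
    simp only [Nat.factorial_one, Nat.cast_one, div_one, pow_one, C_mul, Function.iterate_one]
    linear_combination (-(C h * (derivative P).comp (C c - X))) * hB
  · intro j _ hj
    rcases j.even_or_odd with he | ho
    · rw [he.neg_one_pow, one_mul, sub_self]
    · rw [bernoulli_eq_zero_of_odd ho (lt_of_le_of_ne ho.pos (Ne.symm hj))]
      simp
  · simp

theorem bernoulliOperator_comp_neg_X_eq_self {h : ℚ} {P : ℚ[X]}
    (hP : P.comp (C (-h) - X) = P) :
    (bernoulliOperator h P).comp (-X) = bernoulliOperator h P :=
  calc (bernoulliOperator h P).comp (-X)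
      = ((bernoulliOperator h P).comp (X + C h)).comp (C (-h) - X) := by
        rw [comp_assoc, add_comp, X_comp, C_comp, C_neg]
        ring_nf
    _ = bernoulliOperator h (P.comp (C (-h) - X)) := by
        rw [bernoulliOperator_comp_X_add_C, bernoulliOperator_comp_C_sub_X]
    _ = bernoulliOperator h P := by rw [hP]

theorem coeff_eq_zero_of_comp_neg_X_eq_self {R : Type*} [Ring R] [NoZeroDivisors R] [CharZero R]
    {Q : R[X]} (hQ : Q.comp (-X) = Q) {m : ℕ} (hm : Odd m) : Q.coeff m = 0 := by
  have hcoeff := congrArg (coeff · m) hQ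
  rwa [← neg_one_mul (X : R[X]), ← C_1, ← C_neg, comp_C_mul_X_coeff, hm.neg_one_pow,
    mul_neg_one, CharZero.neg_eq_self_iff] at hcoeff

noncomputable def genGPolynomial (n : ℕ) : ℚ[X] :=
  ∏ i ∈ range n, (C ((i + 1 : ℚ)⁻¹) * X + 1)

theorem genG_eq_zero_of_lt {n k : ℕ} (h : n < k) : genG n k = 0 := by
  rw [genG, powersetCard_eq_empty.2 (by simpa using h), sum_empty]

theorem coeff_genGPolynomial (n k : ℕ) : (genGPolynomial n).coeff k = genG n k := by
  rw [genGPolynomial, prod_add, finsetSum_coeff, genG, powersetCard_eq_filter, sum_filter]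
  refine sum_congr rfl fun t _ => ?_
  rw [prod_const_one, mul_one, prod_mul_distrib, prod_const, ← map_prod, coeff_C_mul,
    coeff_X_pow]
  rcases eq_or_ne t.card k with h | h
  · simp [h, one_div]
  · simp [h, Ne.symm h]

theorem natDegree_genGPolynomial_le (n : ℕ) : (genGPolynomial n).natDegree ≤ n :=
  natDegree_le_iff_coeff_eq_zero.2 fun k hk => by
    rw [coeff_genGPolynomial, genG_eq_zero_of_lt hk]

theorem genGPolynomial_comp_C_sub_X {n : ℕ} (hn : Even n) :
    (genGPolynomial n).comp (C (-((n + 1 : ℕ) : ℚ)) - X) = genGPolynomial n := by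
  refine Polynomial.funext fun x => ?_
  simp only [genGPolynomial, eval_comp, eval_prod, eval_add, eval_mul, eval_C, eval_X, eval_sub,
    eval_one]
  calc ∏ i ∈ range n, ((i + 1 : ℚ)⁻¹ * (-((n + 1 : ℕ) : ℚ) - x) + 1)
      = ∏ i ∈ range n, (-1 * ((i + 1 : ℚ)⁻¹ * (x + ((n - 1 - i : ℕ) : ℚ) + 1))) :=
        prod_congr rfl fun i hi => by
          rw [Nat.sub_sub, Nat.cast_sub (by rw [mem_range] at hi; omega)]
          push_cast
          field_simp
          ring
    _ = ∏ i ∈ range n, ((i + 1 : ℚ)⁻¹ * (x + i + 1)) := by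
        rw [prod_mul_distrib, prod_const, card_range, hn.neg_one_pow, one_mul, prod_mul_distrib,
          prod_mul_distrib, prod_range_reflect (fun i => x + i + 1)]
    _ = ∏ i ∈ range n, ((i + 1 : ℚ)⁻¹ * x + 1) :=
        prod_congr rfl fun i _ => by
          field_simp
          ring

end

theorem bernoulli_genG_sum_eq_zero_general (p : ℕ) (hodd : Odd p)
    (i : ℕ) (hi : 1 ≤ i) :
    ∑ j ∈ Finset.range (p - 2 * i + 1),
      bernoulli j * ((j + 2 * i - 1).choose j) * genG (p - 1) (j + 2 * i - 1) * (p : ℚ) ^ j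
      = 0 := by
  have hF : (genGPolynomial (p - 1)).comp (Polynomial.C (-(p : ℚ)) - Polynomial.X) =
      genGPolynomial (p - 1) := by
    have hn : Even (p - 1) := Nat.Odd.sub_odd hodd odd_one
    simpa [Nat.sub_add_cancel hodd.pos] using genGPolynomial_comp_C_sub_X hn
  have hcoeff := coeff_eq_zero_of_comp_neg_X_eq_self (bernoulliOperator_comp_neg_X_eq_self hF)
    (m := 2 * i - 1) ⟨i - 1, by omega⟩
  rw [coeff_bernoulliOperator (N := p - 2 * i)
    ((natDegree_genGPolynomial_le _).trans (by omega))] at hcoeff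
  rw [← hcoeff]
  refine Finset.sum_congr rfl fun j _ => ?_
  rw [coeff_genGPolynomial, show 2 * i - 1 + j = j + 2 * i - 1 by omega]

theorem bernoulli_genG_sum_eq_zero (p : ℕ) (hp : p.Prime) (hodd : Odd p)
    (i : ℕ) (hi : 1 ≤ i) :
    ∑ j ∈ Finset.range (p - 2 * i + 1),
      bernoulli j * ((j + 2 * i - 1).choose j) * genG (p - 1) (j + 2 * i - 1) * (p : ℚ) ^ j
      = 0 :=
  bernoulli_genG_sum_eq_zero_general p hodd i hi
end

section
/- For every nonnegative integer k there exists a polynomial P_k with rational coefficients, of degree at most 2k, such that P_k(n) = A_{n,n-k} for every integer n ≥ k. Moreover, if k > 0, then P_k(u) = 0 for every u in {-1, 0, 1, ..., k}. -/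
/-- Generalized binomial coefficient with integer top: `C(a,b) = a(a-1)⋯(a-b+1)/b!`. -/
def intChoose (a : ℤ) (b : ℕ) : ℚ :=
  (∏ i ∈ Finset.range b, ((a : ℚ) - i)) / b.factorial

/-- Bernoulli–Stirling numbers of the first kind. -/
def bsA (n k : ℕ) : ℚ :=
  ∑ h ∈ Finset.range (n + 1),
    bernoulli h * intChoose ((k : ℤ) + h - 1) h * stirling1 n (h + k) * (n : ℚ) ^ h

/-!
Only the terms `h ≤ k` of the sum defining `A_{n,n-k}` survive, since `[n, n-k+h] = 0` for `h > k`.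
In term `h`, `C(n-k+h-1, h) = (n+h-k-1)(n+h-k-2)⋯(n-k)/h!` has degree `h` in `n`, and
`[n, n-(k-h)] = T_{k-h}(n-(k-h))`, where `T_j(m) = [m+j, m]` (`stirlingDiag j`) is a polynomial of
degree `2j`: by the recurrence `[m+j+2, m+1] = (m+j+1)[m+j+1, m+1] + [m+j+1, m]`, `T_{j+1}` is the
antidifference of `(x+j+1) T_j(x+1)` vanishing at `0`. Running this difference equation backwards
gives `T_j(-t) = 0` for `0 ≤ t ≤ j` (when `j > 0`) and `T_j(-j-1) = 1`. So for `0 ≤ u ≤ k` every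
term has a vanishing factor (the falling factorial, `u^h` or `T_{k-h}`), while at `u = -1` term `h`
equals `C(k+1, h) B_h`, and these sum to `0`.
-/

open Polynomial hiding bernoulli sum_bernoulli
open Finset Nat

theorem stirling1_eq_stirlingFirst : stirling1 = Nat.stirlingFirst := by
  funext n k
  induction n generalizing k with
  | zero => cases k <;> rfl
  | succ n ih => cases k <;> simp [stirling1, Nat.stirlingFirst, ih]

theorem intChoose_eq_descPochhammer_eval_div (a : ℤ) (b : ℕ) :
    intChoose a b = (descPochhammer ℚ b).eval (a : ℚ) / b ! := by
  rw [intChoose, descPochhammer_eval_eq_prod_range]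

theorem descPochhammer_succ_eval_add_one_sub {R : Type*} [CommRing R] (m : ℕ) (x : R) :
    (descPochhammer R (m + 1)).eval (x + 1) - (descPochhammer R (m + 1)).eval x =
      (m + 1) * (descPochhammer R m).eval x := by
  rw [descPochhammer_succ_eval m x, descPochhammer_succ_left, eval_mul, eval_X, eval_comp,
    eval_sub, eval_X, eval_one, add_sub_cancel_right]
  ring

section Antidifference

variable {K : Type*} [Field K] [CharZero K]

/-- Subtracting the multiple `q.coeff d • descPochhammer K d` lowers the degree, and
`descPochhammer K (d + 1) / (d + 1)` is an antidifference of `descPochhammer K d`. -/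
theorem exists_antidiff_of_degree_lt (d : ℕ) (q : K[X]) (hq : q.degree < d) :
    ∃ p : K[X], p.eval 0 = 0 ∧ p.degree ≤ d ∧ ∀ x, p.eval (x + 1) - p.eval x = q.eval x := by
  induction d generalizing q with
  | zero =>
    obtain rfl : q = 0 := by simpa using hq
    exact ⟨0, by simp⟩
  | succ d ih =>
    set c := q.coeff d
    have hlead : (descPochhammer K d).coeff d = 1 := by
      simpa [descPochhammer_natDegree] using (monic_descPochhammer K d).coeff_natDegree
    have hlower : (q - C c * descPochhammer K d).degree < d := by
      rw [degree_lt_iff_coeff_zero] at hq ⊢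
      intro m hm
      rcases hm.eq_or_lt with rfl | hm
      · simp [coeff_sub, coeff_C_mul, hlead, c]
      · rw [coeff_sub, coeff_C_mul, hq m hm, coeff_eq_zero_of_natDegree_lt
          (by rwa [descPochhammer_natDegree]), mul_zero, sub_zero]
    obtain ⟨p, hp0, hpdeg, hpdiff⟩ := ih _ hlower
    refine ⟨C (c / (d + 1)) * descPochhammer K (d + 1) + p, ?_, ?_, fun x => ?_⟩
    · simp [hp0]
    · refine degree_add_le_of_degree_le (degree_le_of_natDegree_le ?_) (hpdeg.trans ?_)
      · exact (natDegree_C_mul_le _ _).trans (descPochhammer_natDegree K (d + 1)).le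
      · exact_mod_cast d.le_succ
    · have hcd : c / (d + 1) * (d + 1) = c := div_mul_cancel₀ c (Nat.cast_add_one_ne_zero d)
      simp only [eval_add, eval_mul, eval_C, eval_sub] at hpdiff ⊢
      linear_combination (c / (d + 1)) * descPochhammer_succ_eval_add_one_sub d x + hpdiff x +
        (descPochhammer K d).eval x * hcd

theorem exists_antidiff (q : K[X]) :
    ∃ p : K[X], p.eval 0 = 0 ∧ p.natDegree ≤ q.natDegree + 1 ∧
      ∀ x, p.eval (x + 1) - p.eval x = q.eval x := by
  obtain ⟨p, hp0, hpdeg, hpdiff⟩ := exists_antidiff_of_degree_lt (q.natDegree + 1) q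
    (degree_le_natDegree.trans_lt (by exact_mod_cast q.natDegree.lt_succ_self))
  exact ⟨p, hp0, natDegree_le_of_degree_le hpdeg, hpdiff⟩

noncomputable def antidiff (q : K[X]) : K[X] := (exists_antidiff q).choose

theorem antidiff_eval_zero (q : K[X]) : (antidiff q).eval 0 = 0 :=
  (exists_antidiff q).choose_spec.1

theorem natDegree_antidiff_le (q : K[X]) : (antidiff q).natDegree ≤ q.natDegree + 1 :=
  (exists_antidiff q).choose_spec.2.1

theorem antidiff_eval_add_one_sub (q : K[X]) (x : K) :
    (antidiff q).eval (x + 1) - (antidiff q).eval x = q.eval x :=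
  (exists_antidiff q).choose_spec.2.2 x

end Antidifference

noncomputable def stirlingDiag : ℕ → ℚ[X]
  | 0 => 1
  | j + 1 => antidiff ((X + C ((j : ℚ) + 1)) * (stirlingDiag j).comp (X + 1))

theorem stirlingDiag_succ_eval_add_one_sub (j : ℕ) (x : ℚ) :
    (stirlingDiag (j + 1)).eval (x + 1) - (stirlingDiag (j + 1)).eval x =
      (x + j + 1) * (stirlingDiag j).eval (x + 1) := by
  rw [stirlingDiag, antidiff_eval_add_one_sub]
  simp only [eval_mul, eval_add, eval_X, eval_C, eval_comp, eval_one]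
  ring

theorem stirlingDiag_succ_eval_zero (j : ℕ) : (stirlingDiag (j + 1)).eval 0 = 0 :=
  antidiff_eval_zero _

theorem natDegree_stirlingDiag_le (j : ℕ) : (stirlingDiag j).natDegree ≤ 2 * j := by
  induction j with
  | zero => simp [stirlingDiag]
  | succ j ih =>
    refine (natDegree_antidiff_le _).trans ?_
    have hlin : (X + C ((j : ℚ) + 1)).natDegree = 1 := natDegree_X_add_C _
    have hcomp : ((stirlingDiag j).comp (X + 1)).natDegree ≤ 2 * j := by
      rw [natDegree_comp, ← C_1, natDegree_X_add_C, mul_one]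
      exact ih
    have := natDegree_mul_le (p := X + C ((j : ℚ) + 1)) (q := (stirlingDiag j).comp (X + 1))
    omega

theorem stirlingDiag_eval_natCast (j n : ℕ) :
    (stirlingDiag j).eval (n : ℚ) = stirling1 (n + j) n := by
  rw [stirling1_eq_stirlingFirst]
  induction j generalizing n with
  | zero => simp [stirlingDiag, stirlingFirst_self]
  | succ j ih =>
    induction n with
    | zero => simp [stirlingDiag_succ_eval_zero]
    | succ n ihn =>
      have hrec : stirlingFirst (n + 1 + (j + 1)) (n + 1) =
          (n + j + 1) * stirlingFirst (n + 1 + j) (n + 1) + stirlingFirst (n + (j + 1)) n := by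
        rw [show n + 1 + (j + 1) = n + j + 1 + 1 by omega, stirlingFirst_succ_succ,
          show n + 1 + j = n + j + 1 by omega, show n + (j + 1) = n + j + 1 by omega]
      rw [Nat.cast_succ, eq_add_of_sub_eq (stirlingDiag_succ_eval_add_one_sub j n), ihn,
        ← Nat.cast_succ, ih, hrec]
      push_cast
      ring

theorem stirlingDiag_eval_neg_natCast (j t : ℕ) (hj : 0 < j) (ht : t ≤ j) :
    (stirlingDiag j).eval (-t : ℚ) = 0 := by
  induction j generalizing t with
  | zero => omega
  | succ j ih =>
    induction t with
    | zero => simpa using stirlingDiag_succ_eval_zero j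
    | succ t iht =>
      have hstep := stirlingDiag_succ_eval_add_one_sub j (-(t + 1 : ℚ))
      rw [show (-(t + 1 : ℚ) + 1) = -t by ring, iht (by omega)] at hstep
      have hvanish : (-(t + 1 : ℚ) + j + 1) * (stirlingDiag j).eval (-t : ℚ) = 0 := by
        rcases (Nat.lt_succ_iff.mp ht).eq_or_lt with rfl | htj
        · ring
        · rw [ih t (by omega) htj.le, mul_zero]
      push_cast
      linarith

theorem stirlingDiag_eval_neg_natCast_sub_one (j : ℕ) :
    (stirlingDiag j).eval (-j - 1 : ℚ) = 1 := by
  induction j with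
  | zero => simp [stirlingDiag]
  | succ j ih =>
    have hstep := stirlingDiag_succ_eval_add_one_sub j (-j - 2 : ℚ)
    rw [show (-j - 2 + 1 : ℚ) = -(j + 1 : ℕ) by push_cast; ring,
      stirlingDiag_eval_neg_natCast (j + 1) (j + 1) j.succ_pos le_rfl,
      show (-(j + 1 : ℕ) : ℚ) = -j - 1 by push_cast; ring, ih] at hstep
    rw [show (-(j + 1 : ℕ) - 1 : ℚ) = -j - 2 by push_cast; ring]
    linarith

theorem descPochhammer_eval_natCast_sub_natCast_sub_one {R : Type*} [CommRing R] (h m : ℕ) :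
    (descPochhammer R h).eval ((h : R) - m - 1) = (-1) ^ h * m.descFactorial h := by
  rw [descPochhammer_eval_eq_ascPochhammer, show (h : R) - m - 1 - h + 1 = -(m : R) by ring,
    ascPochhammer_eval_neg_eq_descPochhammer, descPochhammer_eval_eq_descFactorial]

noncomputable def bsAPoly (k : ℕ) : ℚ[X] :=
  ∑ h ∈ range (k + 1), C (bernoulli h / h !) * (descPochhammer ℚ h).comp (X + C ((h : ℚ) - k - 1)) *
    (stirlingDiag (k - h)).comp (X - C ((k - h : ℕ) : ℚ)) * X ^ h

theorem bsAPoly_eval (k : ℕ) (x : ℚ) :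
    (bsAPoly k).eval x = ∑ h ∈ range (k + 1), bernoulli h / h ! *
      (descPochhammer ℚ h).eval (x + (h - k - 1)) * (stirlingDiag (k - h)).eval (x - (k - h : ℕ)) *
        x ^ h := by
  simp only [bsAPoly, eval_finsetSum, eval_mul, eval_C, eval_comp, eval_add, eval_sub, eval_X,
    eval_pow]

theorem natDegree_bsAPoly_le (k : ℕ) : (bsAPoly k).natDegree ≤ 2 * k := by
  refine natDegree_sum_le_of_forall_le _ _ fun h hh => ?_
  have hhk : h ≤ k := Nat.lt_succ_iff.mp (mem_range.mp hh)
  have hdesc : ((descPochhammer ℚ h).comp (X + C ((h : ℚ) - k - 1))).natDegree = h := by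
    rw [natDegree_comp, natDegree_X_add_C, descPochhammer_natDegree, mul_one]
  have hdiag : ((stirlingDiag (k - h)).comp (X - C ((k - h : ℕ) : ℚ))).natDegree ≤ 2 * (k - h) := by
    rw [natDegree_comp, natDegree_X_sub_C, mul_one]
    exact natDegree_stirlingDiag_le _
  refine natDegree_mul_le.trans ?_
  rw [natDegree_X_pow]
  refine Nat.add_le_of_le_sub (by omega) (natDegree_mul_le.trans ?_)
  have := natDegree_C_mul_le (bernoulli h / h !)
    ((descPochhammer ℚ h).comp (X + C ((h : ℚ) - k - 1)))
  omega

theorem bsAPoly_eval_natCast (k n : ℕ) (hn : k ≤ n) : (bsAPoly k).eval (n : ℚ) = bsA n (n - k) := by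
  rw [bsAPoly_eval, bsA, ← sum_subset (range_subset_range.2 (by omega : k + 1 ≤ n + 1))]
  · refine sum_congr rfl fun h hh => ?_
    have hhk : h ≤ k := Nat.lt_succ_iff.mp (mem_range.mp hh)
    have hdiag : (n : ℚ) - (k - h : ℕ) = (h + (n - k) : ℕ) := by
      push_cast [Nat.cast_sub hhk, Nat.cast_sub hn]
      ring
    have htop : ((((n - k : ℕ) : ℤ) + h - 1 : ℤ) : ℚ) = n + (h - k - 1) := by
      push_cast [Nat.cast_sub hn]
      ring
    rw [hdiag, stirlingDiag_eval_natCast, show h + (n - k) + (k - h) = n by omega,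
      intChoose_eq_descPochhammer_eval_div, htop]
    ring
  · intro h _ hh
    rw [stirling1_eq_stirlingFirst, stirlingFirst_eq_zero_of_lt (by simp at hh; omega)]
    simp

theorem bsAPoly_eval_neg_one (k : ℕ) (hk : 0 < k) : (bsAPoly k).eval (-1) = 0 := by
  have hterm : ∀ h ∈ range (k + 1), bernoulli h / h ! *
      (descPochhammer ℚ h).eval (-1 + ((h : ℚ) - k - 1)) *
        (stirlingDiag (k - h)).eval (-1 - ((k - h : ℕ) : ℚ)) * (-1) ^ h =
      (k + 1).choose h * bernoulli h := by
    intro h hh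
    have hhk : h ≤ k := Nat.lt_succ_iff.mp (mem_range.mp hh)
    rw [show (-1 + (h - k - 1) : ℚ) = h - (k + 1 : ℕ) - 1 by push_cast; ring,
      descPochhammer_eval_natCast_sub_natCast_sub_one, Nat.descFactorial_eq_factorial_mul_choose,
      show (-1 - (k - h : ℕ) : ℚ) = -(k - h : ℕ) - 1 by ring,
      stirlingDiag_eval_neg_natCast_sub_one]
    have hfac : (h ! : ℚ) ≠ 0 := Nat.cast_ne_zero.2 h.factorial_ne_zero
    have hsign : ((-1 : ℚ) ^ h) * (-1) ^ h = 1 := by rw [← mul_pow]; norm_num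
    push_cast
    field_simp
    linear_combination ((k + 1).choose h * bernoulli h : ℚ) * hsign
  rw [bsAPoly_eval, sum_congr rfl hterm, sum_bernoulli, if_neg (by omega)]

theorem bsAPoly_eval_natCast_of_le (k m : ℕ) (hk : 0 < k) (hm : m ≤ k) :
    (bsAPoly k).eval (m : ℚ) = 0 := by
  rw [bsAPoly_eval]
  refine sum_eq_zero fun h hh => ?_
  have hhk : h ≤ k := Nat.lt_succ_iff.mp (mem_range.mp hh)
  rcases lt_or_ge (k - h) m with hlt | hle
  · have : (m : ℚ) + (h - k - 1) = (m + h - (k + 1) : ℕ) := by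
      push_cast [Nat.cast_sub (by omega : k + 1 ≤ m + h)]
      ring
    rw [this, descPochhammer_eval_coe_nat_of_lt (by omega)]
    simp
  · by_cases hzero : m = 0 ∧ 0 < h
    · rw [hzero.1, Nat.cast_zero, zero_pow hzero.2.ne']
      simp
    · have : (m : ℚ) - (k - h : ℕ) = -(k - h - m : ℕ) := by
        push_cast [Nat.cast_sub hle]
        ring
      rw [this, stirlingDiag_eval_neg_natCast _ _ (by omega) (by omega)]
      simp

theorem bsA_polynomial_exists (k : ℕ) :
    ∃ P : Polynomial ℚ, P.degree ≤ 2 * k ∧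
      (∀ n : ℕ, k ≤ n → P.eval (n : ℚ) = bsA n (n - k)) ∧
      (0 < k → ∀ u : ℤ, -1 ≤ u → u ≤ (k : ℤ) → P.eval (u : ℚ) = 0) := by
  refine ⟨bsAPoly k, ?_, bsAPoly_eval_natCast k, fun hk u hu₁ huk => ?_⟩
  · exact (degree_le_of_natDegree_le (natDegree_bsAPoly_le k)).trans_eq (by norm_cast)
  · rcases hu₁.eq_or_lt with rfl | hu₀
    · simpa using bsAPoly_eval_neg_one k hk
    · obtain ⟨m, rfl⟩ := Int.eq_ofNat_of_zero_le (by omega : 0 ≤ u)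
      exact_mod_cast bsAPoly_eval_natCast_of_le k m hk (by omega)
end
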